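/- For any n ≥ 1, ℓ ∈ {1,…,n}, ε ∈ (0,1), and x ∈ (0, 1−ε), the quantile function of the Beta(ℓ, n−ℓ+1) distribution satisfies 0 ≤ F_{U_(ℓ:n)}⁻¹(x+ε) − F_{U_(ℓ:n)}⁻¹(x) ≤ (ε/√(n+2)) · √2 / g(min{x, 1−x−ε}), where g(t) := sup_{δ ∈ (0, min{t, 1−t})} (t−δ)/√(log(1/δ)) for t ∈ (0, 1/2]. -/

import Mathlib

open MeasureTheory ProbabilityTheory Set

/-- The `r`-th smallest value (order statistic, 1-indexed, ties with multiplicity)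
of a finite real vector. -/
noncomputable def orderStat {N : ℕ} (S : Fin N → ℝ) (r : ℕ) : ℝ :=
  ((Multiset.ofList (List.ofFn S)).sort (· ≤ ·)).getD (r - 1) 0

/-- Product of `N` i.i.d. uniform distributions on `[0,1]`. -/
noncomputable def unifPi (N : ℕ) : Measure (Fin N → ℝ) :=
  Measure.pi fun _ => volume.restrict (Icc (0:ℝ) 1)

/-- The Beta(r, N-r+1) distribution: the law of the `r`-th order statistic of
`N` i.i.d. uniform random variables on `[0,1]`. -/
noncomputable def betaOS (N r : ℕ) : Measure ℝ :=
  Measure.map (fun u => orderStat u r) (unifPi N)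

/-- The cdf of the Beta(r, N-r+1) distribution (cdf of `U_(r:N)`). -/
noncomputable def betaCDF (N r : ℕ) (t : ℝ) : ℝ := (betaOS N r (Iic t)).toReal

/-- Generalized inverse (quantile function) of a cdf. -/
noncomputable def genInv (F : ℝ → ℝ) (p : ℝ) : ℝ := sInf {x | p ≤ F x}

/-- Quantile function of the Beta(r, N-r+1) distribution. -/
noncomputable def betaQuantile (N r : ℕ) (p : ℝ) : ℝ := genInv (betaCDF N r) p

/-- Quantile-of-quantiles: the `k`-th smallest of the `m` within-group `ℓ`-th
order statistics of an `n × m` array. -/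
noncomputable def qqStat {n m : ℕ} (ℓ k : ℕ) (Z : Fin n → Fin m → ℝ) : ℝ :=
  orderStat (fun j => orderStat (fun i => Z i j) ℓ) k

/-- Product of `n × m` i.i.d. uniform distributions on `[0,1]`. -/
noncomputable def unifPi2 (n m : ℕ) : Measure (Fin n → Fin m → ℝ) :=
  Measure.pi fun _ => Measure.pi fun _ => volume.restrict (Icc (0:ℝ) 1)

/-- The law of `U_(ℓ:n, k:m)`, the `k`-th order statistic of the `m` within-group
`ℓ`-th order statistics of an `n × m` array of i.i.d. uniform variables
(equivalently, of `m` i.i.d. Beta(ℓ, n-ℓ+1) variables). -/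
noncomputable def betaBetaOS (n m ℓ k : ℕ) : Measure ℝ :=
  Measure.map (qqStat ℓ k) (unifPi2 n m)

/-- The auxiliary function `g(t) = sup_{δ ∈ (0, min{t,1-t})} (t-δ)/√(log(1/δ))`. -/
noncomputable def gFun (t : ℝ) : ℝ :=
  sSup ((fun δ => (t - δ) / Real.sqrt (Real.log (1/δ))) '' Ioo 0 (min t (1 - t)))

/-- The cdf of the Poisson-Binomial distribution with parameter vector `u`,
evaluated at the integer `r`. -/
noncomputable def pbCDF {m : ℕ} (u : Fin m → ℝ) (r : ℕ) : ℝ :=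
  ∑ A ∈ Finset.univ.powerset.filter (fun A : Finset (Fin m) => A.card ≤ r),
    (∏ j ∈ A, u j) * ∏ j ∈ Aᶜ, (1 - u j)


/-!
The cdf of `U_(ℓ:n)` at `p ∈ [0,1]` is the binomial tail `P(Bin(n, p) ≥ ℓ)`, a polynomial
whose derivative is the Beta(ℓ, n-ℓ+1) density `p ↦ n C(n-1, ℓ-1) p^(ℓ-1) (1-p)^(n-ℓ)`.
The density is unimodal with mode `m = (ℓ-1)/(n-1)`, so the cdf `F` is convex on `[0, m]`
and concave on `[m, 1]`. For `0 < δ < t = min{x, 1-x-ε}`, the quantiles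
`Q(δ) < Q(x) < Q(x+ε) < Q(1-δ)` are mapped by `F` to `δ, x, x+ε, 1-δ`; comparing chord slopes
of a convex-concave function gives `(Q(x+ε) - Q(x)) (t - δ) ≤ ε (Q(1-δ) - Q(δ))`.
Hoeffding's inequality for the binomial distribution bounds `Q(1-δ) - Q(δ)` by
`√(2 log(1/δ)/(n+2))`, and taking the supremum over `δ` of `(t - δ)/√(log(1/δ))` produces
`g(t)`.
-/

open scoped Polynomial

theorem List.Pairwise.getElem_le_iff_lt_countP {α : Type*} [Preorder α] [DecidableLE α]
    {l : List α} (hl : l.Pairwise (· ≤ ·)) {k : ℕ} (hk : k < l.length) (t : α) :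
    l[k] ≤ t ↔ k < l.countP (· ≤ t) := by
  induction l generalizing k with
  | nil => simp at hk
  | cons a l ih =>
    obtain ⟨ha, hl⟩ := List.pairwise_cons.mp hl
    by_cases hat : a ≤ t
    · cases k with
      | zero => simp [hat]
      | succ k => simp [hat, ih hl (Nat.lt_of_succ_lt_succ hk)]
    · have hgt : ∀ b ∈ a :: l, ¬ b ≤ t := fun b hb hbt =>
        hat ((List.mem_cons.mp hb).elim (· ▸ hbt) fun hb => (ha b hb).trans hbt)
      rw [List.countP_eq_zero.mpr fun b hb => by simpa using hgt b hb]
      simpa using hgt _ (List.getElem_mem hk)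

open Finset in
theorem orderStat_le_iff {N r : ℕ} (hr : 1 ≤ r) (hrN : r ≤ N) (u : Fin N → ℝ) (t : ℝ) :
    orderStat u r ≤ t ↔ r ≤ #{i | u i ≤ t} := by
  set l := (Multiset.ofList (List.ofFn u)).sort (· ≤ ·)
  have hlen : l.length = N := by simp [l]
  have hcount : l.countP (· ≤ t) = #{i | u i ≤ t} := by
    rw [← Multiset.coe_countP, Multiset.sort_eq, ← Fin.univ_val_map, Multiset.countP_map]
    rfl
  have hk : r - 1 < l.length := by omega
  rw [orderStat, List.getD_eq_getElem _ _ hk,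
    (Multiset.pairwise_sort _ _).getElem_le_iff_lt_countP, hcount]
  omega

theorem measurable_orderStat {N r : ℕ} (hr : 1 ≤ r) (hrN : r ≤ N) :
    Measurable fun u : Fin N → ℝ => orderStat u r := by
  refine measurable_of_Iic fun t => ?_
  have : (fun u : Fin N → ℝ => orderStat u r) ⁻¹' Iic t
      = (fun u : Fin N → ℝ => ∑ i, if u i ≤ t then 1 else 0) ⁻¹' Ici r := by
    ext u
    simp only [mem_preimage, mem_Iic, orderStat_le_iff hr hrN, Finset.sum_boole]
    simp
  rw [this]
  exact (Finset.measurable_sum _ fun i _ => Measurable.ite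
    (measurableSet_le (measurable_pi_apply i) measurable_const) measurable_const measurable_const)
    measurableSet_Ici

instance isProbabilityMeasure_volume_restrict_unitInterval :
    IsProbabilityMeasure (volume.restrict (Icc (0 : ℝ) 1)) :=
  ⟨by simp⟩

instance isProbabilityMeasure_unifPi (n : ℕ) : IsProbabilityMeasure (unifPi n) := by
  unfold unifPi; infer_instance

theorem volume_restrict_unitInterval_real_Iic (t : ℝ) :
    (volume.restrict (Icc (0 : ℝ) 1)).real (Iic t) = projIcc 0 1 zero_le_one t := by
  have : Iic t ∩ Icc 0 1 = Icc 0 (min 1 t) := by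
    ext x; simp only [mem_inter_iff, mem_Iic, mem_Icc, le_min_iff]; tauto
  rw [measureReal_def, Measure.restrict_apply measurableSet_Iic, this, Real.volume_Icc,
    ENNReal.toReal_ofReal', coe_projIcc, sub_zero, max_comm]

open Finset in
theorem setOf_filter_le_eq_pi {n : ℕ} (t : ℝ) (A : Finset (Fin n)) :
    {u : Fin n → ℝ | univ.filter (u · ≤ t) = A}
      = Set.pi Set.univ fun i => if i ∈ A then Iic t else (Iic t)ᶜ := by
  ext u
  simp only [Finset.ext_iff, mem_filter, mem_univ, Set.mem_ofPred_eq, Set.mem_pi, true_implies]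
  refine forall_congr' fun i => ?_
  split_ifs with hi <;> simp [hi]

open Finset in
theorem unifPi_real_filter_le_eq {n : ℕ} (t : ℝ) (A : Finset (Fin n)) :
    (unifPi n).real {u | univ.filter (u · ≤ t) = A}
      = (projIcc 0 1 zero_le_one t : ℝ) ^ #A * (1 - projIcc 0 1 zero_le_one t) ^ (n - #A) := by
  rw [setOf_filter_le_eq_pi, unifPi, measureReal_def, Measure.pi_pi, ENNReal.toReal_prod]
  simp_rw [apply_ite (volume.restrict (Icc (0 : ℝ) 1)), apply_ite ENNReal.toReal, prod_ite,
    prod_const]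
  rw [← measureReal_def, ← measureReal_def, probReal_compl_eq_one_sub measurableSet_Iic,
    volume_restrict_unitInterval_real_Iic, filter_mem_eq_inter, Finset.univ_inter,
    filter_notMem_eq_sdiff, card_univ_sdiff, Fintype.card_fin]

/-- `(binomialTail n r).eval p` is `P(Bin(n, p) ≥ r)`. -/
noncomputable def binomialTail (n r : ℕ) : ℝ[X] :=
  ∑ k ∈ Finset.Icc r n, bernsteinPolynomial ℝ n k

theorem eval_bernsteinPolynomial (n k : ℕ) (p : ℝ) :
    (bernsteinPolynomial ℝ n k).eval p = n.choose k * p ^ k * (1 - p) ^ (n - k) := by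
  simp [bernsteinPolynomial]

open Finset in
theorem betaCDF_eq_eval_binomialTail {n r : ℕ} (hr : 1 ≤ r) (hrn : r ≤ n) (t : ℝ) :
    betaCDF n r t = (binomialTail n r).eval (projIcc 0 1 zero_le_one t : ℝ) := by
  set p : ℝ := (projIcc 0 1 zero_le_one t : ℝ)
  set 𝒜 := (univ : Finset (Fin n)).powerset.filter (r ≤ #·)
  have hpreim : (fun u => orderStat u r) ⁻¹' Iic t
      = ⋃ A ∈ 𝒜, {u : Fin n → ℝ | univ.filter (u · ≤ t) = A} := by
    ext u; simp [𝒜, orderStat_le_iff hr hrn]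
  have hdisj : (𝒜 : Set (Finset (Fin n))).PairwiseDisjoint
      fun A => {u : Fin n → ℝ | univ.filter (u · ≤ t) = A} :=
    fun A _ B _ hAB => Set.disjoint_left.mpr fun u hA hB => hAB (hA.symm.trans hB)
  have hmeas (A : Finset (Fin n)) :
      MeasurableSet {u : Fin n → ℝ | univ.filter (u · ≤ t) = A} := by
    rw [setOf_filter_le_eq_pi]
    exact MeasurableSet.univ_pi fun i => by split_ifs <;> simp
  calc betaCDF n r t = (unifPi n).real ((fun u => orderStat u r) ⁻¹' Iic t) :=
        map_measureReal_apply (measurable_orderStat hr hrn) measurableSet_Iic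
    _ = ∑ A ∈ univ.powerset, if r ≤ #A then p ^ #A * (1 - p) ^ (n - #A) else 0 := by
        rw [hpreim, measureReal_biUnion_finset hdisj fun A _ => hmeas A, sum_filter]
        simp_rw [unifPi_real_filter_le_eq]
        rfl
    _ = ∑ k ∈ range (n + 1),
          if r ≤ k then (n.choose k : ℝ) * p ^ k * (1 - p) ^ (n - k) else 0 := by
        rw [sum_powerset_apply_card fun k => if r ≤ k then p ^ k * (1 - p) ^ (n - k) else 0,
          card_univ, Fintype.card_fin]
        simp [mul_assoc]
    _ = (binomialTail n r).eval p := by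
        rw [← sum_filter, binomialTail, Polynomial.eval_finsetSum]
        refine sum_congr ?_ fun k _ => (eval_bernsteinPolynomial n k p).symm
        ext k
        simp only [mem_filter, Finset.mem_range, Finset.mem_Icc]
        omega

open Polynomial in
theorem binomialTail_add_comp_one_sub {n r : ℕ} (hr : r ≤ n + 1) :
    binomialTail n r + (binomialTail n (n + 1 - r)).comp (1 - X) = 1 := by
  have hflip : (binomialTail n (n + 1 - r)).comp (1 - X)
      = ∑ k ∈ Finset.range r, bernsteinPolynomial ℝ n k := by
    rw [binomialTail, sum_comp]
    refine Finset.sum_nbij' (n - ·) (n - ·) ?_ ?_ ?_ ?_ ?_ <;> intro k hk <;>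
      simp only [Finset.mem_Icc, Finset.mem_range] at hk ⊢
    all_goals first | omega | exact bernsteinPolynomial.flip ℝ n k hk.2
  have hsplit : Finset.range (n + 1) = Finset.range r ∪ Finset.Icc r n := by
    ext k; simp only [Finset.mem_union, Finset.mem_range, Finset.mem_Icc]; omega
  rw [hflip, binomialTail, add_comm, ← Finset.sum_union, ← hsplit, bernsteinPolynomial.sum]
  refine Finset.disjoint_left.mpr fun k hk hk' => ?_
  simp only [Finset.mem_range, Finset.mem_Icc] at hk hk'
  omega

theorem eval_zero_binomialTail {n r : ℕ} (hr : 1 ≤ r) : (binomialTail n r).eval 0 = 0 := by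
  rw [binomialTail, Polynomial.eval_finsetSum]
  refine Finset.sum_eq_zero fun k hk => ?_
  rw [bernsteinPolynomial.eval_at_0, if_neg (by rw [Finset.mem_Icc] at hk; omega)]

theorem eval_one_binomialTail {n r : ℕ} (hrn : r ≤ n) : (binomialTail n r).eval 1 = 1 := by
  rw [binomialTail, Polynomial.eval_finsetSum, Finset.sum_eq_single_of_mem n (by simpa)]
  · simp [bernsteinPolynomial.eval_at_1]
  · intro k _ hk
    simp [bernsteinPolynomial.eval_at_1, hk]

open Polynomial in
theorem derivative_binomialTail {n r : ℕ} (hr : 1 ≤ r) (hrn : r ≤ n) :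
    derivative (binomialTail n r) = n * bernsteinPolynomial ℝ (n - 1) (r - 1) := by
  obtain ⟨s, rfl⟩ : ∃ s, r = s + 1 := ⟨r - 1, by omega⟩
  have hIcc : Finset.Icc (s + 1) n = Finset.Ico (s + 1) (n + 1) := rfl
  rw [binomialTail, derivative_sum, hIcc, ← Finset.sum_Ico_add' (c := 1)]
  simp_rw [bernsteinPolynomial.derivative_succ]
  have htelescope := Finset.sum_Ico_sub (bernsteinPolynomial ℝ (n - 1)) (by omega : s ≤ n)
  rw [bernsteinPolynomial.eq_zero_of_lt ℝ (by omega : n - 1 < n)] at htelescope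
  rw [← Finset.mul_sum, Nat.add_sub_cancel]
  rw [Finset.sum_sub_distrib] at htelescope ⊢
  linear_combination (-(n : ℝ[X])) * htelescope

/-- Hoeffding's lemma for a Bernoulli(`p`) variable. -/
theorem mul_exp_add_one_sub_le_exp {p : ℝ} (hp : p ∈ Icc 0 1) (s : ℝ) :
    p * Real.exp s + (1 - p) ≤ Real.exp (s * p + s ^ 2 / 8) := by
  have hmgf :
      p * Real.exp (s * (1 - p)) + (1 - p) * Real.exp (-(s * p)) ≤ Real.exp (s ^ 2 / 8) := by
    have := (hasSubgaussianMGF_of_mem_Icc (μ := bernoulliMeasure (1 : ℝ) 0 ⟨p, hp⟩)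
      (X := fun x => (projIcc 0 1 zero_le_one x : ℝ)) (by fun_prop)
      (ae_of_all _ fun x => Subtype.prop _)).mgf_le s
    convert this using 2
    · simp [mgf, integral_bernoulliMeasure]
    · norm_num; ring
  calc p * Real.exp s + (1 - p)
      = Real.exp (s * p) * (p * Real.exp (s * (1 - p)) + (1 - p) * Real.exp (-(s * p))) := by
        rw [mul_add, mul_left_comm, ← Real.exp_add, mul_left_comm, ← Real.exp_add,
          show s * p + s * (1 - p) = s by ring, add_neg_cancel, Real.exp_zero, mul_one]
    _ ≤ Real.exp (s * p) * Real.exp (s ^ 2 / 8) := by gcongr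
    _ = Real.exp (s * p + s ^ 2 / 8) := by rw [← Real.exp_add]

theorem eval_binomialTail_le_exp_mul_pow {n r : ℕ} {p s : ℝ} (hp : p ∈ Icc 0 1)
    (hs : 0 ≤ s) :
    (binomialTail n r).eval p ≤ Real.exp (-(s * r)) * (p * Real.exp s + (1 - p)) ^ n := by
  have hterm (k : ℕ) : 0 ≤ (n.choose k : ℝ) * p ^ k * (1 - p) ^ (n - k) := by
    have := hp.1; have : 0 ≤ 1 - p := by linarith [hp.2]
    positivity
  rw [add_pow, Finset.mul_sum, binomialTail, Polynomial.eval_finsetSum]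
  calc ∑ k ∈ Finset.Icc r n, (bernsteinPolynomial ℝ n k).eval p
      ≤ ∑ k ∈ Finset.Icc r n,
          Real.exp (s * (k - r)) * (n.choose k * p ^ k * (1 - p) ^ (n - k)) := by
        refine Finset.sum_le_sum fun k hk => ?_
        rw [eval_bernsteinPolynomial]
        refine le_mul_of_one_le_left (hterm k) (Real.one_le_exp (mul_nonneg hs ?_))
        rw [Finset.mem_Icc] at hk
        exact sub_nonneg.mpr (by exact_mod_cast hk.1)
    _ ≤ ∑ k ∈ Finset.range (n + 1),
          Real.exp (s * (k - r)) * (n.choose k * p ^ k * (1 - p) ^ (n - k)) := by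
        refine Finset.sum_le_sum_of_subset_of_nonneg (fun k hk => ?_)
          fun k _ _ => mul_nonneg (Real.exp_pos _).le (hterm k)
        simp only [Finset.mem_Icc, Finset.mem_range] at hk ⊢
        omega
    _ = _ := by
        refine Finset.sum_congr rfl fun k _ => ?_
        rw [mul_pow, ← Real.exp_nat_mul, mul_sub, sub_eq_neg_add, Real.exp_add]
        ring_nf

/-- The Chernoff bound, with the optimal choice `s = 4 (r - n p) / n` in
`eval_binomialTail_le_exp_mul_pow`. -/
theorem eval_binomialTail_le_exp {n r : ℕ} {p : ℝ} (hn : 0 < n) (hp : p ∈ Icc 0 1)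
    (hpr : n * p ≤ r) : (binomialTail n r).eval p ≤ Real.exp (-2 * (r - n * p) ^ 2 / n) := by
  have hn' : (0 : ℝ) < n := by exact_mod_cast hn
  set s := 4 * (r - n * p) / n
  calc (binomialTail n r).eval p ≤ Real.exp (-(s * r)) * (p * Real.exp s + (1 - p)) ^ n :=
        eval_binomialTail_le_exp_mul_pow hp (by positivity)
    _ ≤ Real.exp (-(s * r)) * Real.exp (s * p + s ^ 2 / 8) ^ n := by
        gcongr
        · have := hp.1; have : 0 ≤ 1 - p := by linarith [hp.2]
          positivity
        · exact mul_exp_add_one_sub_le_exp hp s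
    _ = Real.exp (-2 * (r - n * p) ^ 2 / n) := by
        rw [← Real.exp_nat_mul, ← Real.exp_add]
        congr 1
        simp only [s]
        field_simp
        ring

theorem hasDerivAt_pow_mul_one_sub_pow (a b : ℕ) (p : ℝ) :
    HasDerivAt (fun p : ℝ => p ^ a * (1 - p) ^ b)
      (a * p ^ (a - 1) * (1 - p) ^ b - b * p ^ a * (1 - p) ^ (b - 1)) p := by
  refine ((hasDerivAt_pow a p).mul ((hasDerivAt_pow b (1 - p)).comp p
    ((hasDerivAt_id p).const_sub 1))).congr_deriv ?_
  simp only [Function.comp_apply]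
  ring

theorem mul_one_sub_mul_deriv_pow_mul_one_sub_pow (a b : ℕ) (p : ℝ) :
    p * (1 - p) * (a * p ^ (a - 1) * (1 - p) ^ b - b * p ^ a * (1 - p) ^ (b - 1))
      = p ^ a * (1 - p) ^ b * (a - (a + b) * p) := by
  have key (k : ℕ) (x : ℝ) : x * (k * x ^ (k - 1)) = k * x ^ k := by
    cases k <;> simp [pow_succ]; ring
  linear_combination (1 - p) ^ b * (1 - p) * key a p - p ^ a * p * key b (1 - p)

theorem monotoneOn_pow_mul_one_sub_pow (a b : ℕ) :
    MonotoneOn (fun p : ℝ => p ^ a * (1 - p) ^ b) (Icc 0 (a / (a + b))) := by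
  refine monotoneOn_of_deriv_nonneg (convex_Icc _ _) (by fun_prop)
    (fun p _ => (hasDerivAt_pow_mul_one_sub_pow a b p).differentiableAt.differentiableWithinAt)
    fun p hp => ?_
  rw [interior_Icc] at hp
  have hab : (0 : ℝ) < a + b := by
    by_contra! h
    have : (a : ℝ) / (a + b) ≤ 0 := div_nonpos_of_nonneg_of_nonpos (by positivity) h
    linarith [hp.1, hp.2]
  have hp1 : p < 1 := hp.2.trans_le ((div_le_one hab).mpr (by simp))
  have hmode : 0 ≤ a - (a + b) * p := by
    have := (lt_div_iff₀ hab).mp hp.2; linarith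
  rw [(hasDerivAt_pow_mul_one_sub_pow a b p).deriv]
  refine nonneg_of_mul_nonneg_right ?_ (mul_pos hp.1 (sub_pos.mpr hp1))
  rw [mul_one_sub_mul_deriv_pow_mul_one_sub_pow]
  have := hp.1.le; have : 0 ≤ 1 - p := by linarith
  positivity

theorem antitoneOn_pow_mul_one_sub_pow (a b : ℕ) :
    AntitoneOn (fun p : ℝ => p ^ a * (1 - p) ^ b) (Icc (a / (a + b)) 1) := by
  refine antitoneOn_of_deriv_nonpos (convex_Icc _ _) (by fun_prop)
    (fun p _ => (hasDerivAt_pow_mul_one_sub_pow a b p).differentiableAt.differentiableWithinAt)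
    fun p hp => ?_
  rw [interior_Icc] at hp
  have hp0 : 0 < p := lt_of_le_of_lt (by positivity) hp.1
  have hmode : a - (a + b) * p ≤ 0 := by
    rcases (show (0 : ℝ) ≤ a + b by positivity).eq_or_lt with h | h
    · have ha : (a : ℝ) = 0 := by
        linarith [(by positivity : (0 : ℝ) ≤ a), (by positivity : (0 : ℝ) ≤ b)]
      rw [← h, ha, zero_mul, sub_zero]
    · have := (div_lt_iff₀ h).mp hp.1; linarith
  rw [(hasDerivAt_pow_mul_one_sub_pow a b p).deriv]
  refine nonpos_of_mul_nonpos_right ?_ (mul_pos hp0 (sub_pos.mpr hp.2))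
  rw [mul_one_sub_mul_deriv_pow_mul_one_sub_pow]
  have : 0 ≤ 1 - p := by linarith [hp.2]
  exact mul_nonpos_of_nonneg_of_nonpos (by positivity) hmode

section BinomialTailShape

variable {n r : ℕ} (hr : 1 ≤ r) (hrn : r ≤ n)
include hr hrn

theorem hasDerivAt_eval_binomialTail (p : ℝ) :
    HasDerivAt (fun p => (binomialTail n r).eval p)
      (n * (n - 1).choose (r - 1) * (p ^ (r - 1) * (1 - p) ^ (n - r))) p := by
  refine (Polynomial.hasDerivAt (binomialTail n r) p).congr_deriv ?_
  rw [derivative_binomialTail hr hrn, Polynomial.eval_mul, Polynomial.eval_natCast,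
    eval_bernsteinPolynomial, show n - 1 - (r - 1) = n - r by omega]
  ring

theorem monotoneOn_eval_binomialTail :
    MonotoneOn (fun p => (binomialTail n r).eval p) (Icc 0 1) := by
  refine monotoneOn_of_deriv_nonneg (convex_Icc 0 1) (Polynomial.continuousOn _)
    (Polynomial.differentiableOn _) fun p hp => ?_
  rw [interior_Icc] at hp
  have := hp.1.le; have : 0 ≤ 1 - p := by linarith [hp.2]
  rw [(hasDerivAt_eval_binomialTail hr hrn p).deriv]
  positivity

theorem cast_sub_div_cast_sub_add_cast_sub :
    ((r - 1 : ℕ) : ℝ) / ((r - 1 : ℕ) + (n - r : ℕ)) = (r - 1) / (n - 1) := by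
  rw [Nat.cast_sub hr, Nat.cast_sub hrn, Nat.cast_one]
  ring_nf

theorem convexOn_eval_binomialTail :
    ConvexOn ℝ (Icc 0 (((r : ℝ) - 1) / (n - 1))) (fun p => (binomialTail n r).eval p) := by
  refine MonotoneOn.convexOn_of_deriv (convex_Icc _ _) (Polynomial.continuousOn _)
    (Polynomial.differentiableOn _) fun p hp q hq hpq => ?_
  rw [(hasDerivAt_eval_binomialTail hr hrn p).deriv,
    (hasDerivAt_eval_binomialTail hr hrn q).deriv]
  rw [← cast_sub_div_cast_sub_add_cast_sub hr hrn] at hp hq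
  exact mul_le_mul_of_nonneg_left (monotoneOn_pow_mul_one_sub_pow _ _ (interior_subset hp)
    (interior_subset hq) hpq) (by positivity)

theorem concaveOn_eval_binomialTail :
    ConcaveOn ℝ (Icc (((r : ℝ) - 1) / (n - 1)) 1) (fun p => (binomialTail n r).eval p) := by
  refine AntitoneOn.concaveOn_of_deriv (convex_Icc _ _) (Polynomial.continuousOn _)
    (Polynomial.differentiableOn _) fun p hp q hq hpq => ?_
  rw [(hasDerivAt_eval_binomialTail hr hrn p).deriv,
    (hasDerivAt_eval_binomialTail hr hrn q).deriv]
  rw [← cast_sub_div_cast_sub_add_cast_sub hr hrn] at hp hq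
  exact mul_le_mul_of_nonneg_left (antitoneOn_pow_mul_one_sub_pow _ _ (interior_subset hp)
    (interior_subset hq) hpq) (by positivity)

end BinomialTailShape

theorem apply_genInv_eq {F : ℝ → ℝ} {p : ℝ} (hF : Continuous F)
    (hne : {x | p ≤ F x}.Nonempty) (hbdd : BddBelow {x | p ≤ F x}) : F (genInv F p) = p := by
  refine le_antisymm ?_ ((isClosed_le continuous_const hF).csInf_mem hne hbdd)
  refine le_of_tendsto
    (hF.continuousAt.tendsto.mono_left (nhdsWithin_le_nhds (s := Iio (genInv F p)))) ?_
  filter_upwards [self_mem_nhdsWithin] with y (hy : y < genInv F p)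
  by_contra! hpy
  exact (csInf_le hbdd hpy.le).not_gt hy

section BetaQuantile

variable {n r : ℕ} (hr : 1 ≤ r) (hrn : r ≤ n)
include hr hrn

theorem betaCDF_eq_eval_of_mem {t : ℝ} (ht : t ∈ Icc 0 1) :
    betaCDF n r t = (binomialTail n r).eval t := by
  rw [betaCDF_eq_eval_binomialTail hr hrn, projIcc_of_mem _ ht]

theorem betaCDF_of_nonpos {t : ℝ} (ht : t ≤ 0) : betaCDF n r t = 0 := by
  rw [betaCDF_eq_eval_binomialTail hr hrn, projIcc_of_le_left _ ht, eval_zero_binomialTail hr]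

theorem betaCDF_one : betaCDF n r 1 = 1 := by
  rw [betaCDF_eq_eval_of_mem hr hrn (by simp), eval_one_binomialTail hrn]

theorem continuous_betaCDF : Continuous (betaCDF n r) := by
  simp_rw [funext (betaCDF_eq_eval_binomialTail hr hrn)]
  fun_prop

theorem nonneg_of_le_betaCDF {p x : ℝ} (hp : 0 < p) (hx : p ≤ betaCDF n r x) : 0 ≤ x := by
  by_contra! hx0
  exact hp.not_ge (hx.trans (betaCDF_of_nonpos hr hrn hx0.le).le)

theorem bddBelow_setOf_le_betaCDF {p : ℝ} (hp : 0 < p) : BddBelow {x | p ≤ betaCDF n r x} :=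
  ⟨0, fun _ => nonneg_of_le_betaCDF hr hrn hp⟩

theorem one_mem_setOf_le_betaCDF {p : ℝ} (hp : p ≤ 1) : 1 ∈ {x | p ≤ betaCDF n r x} := by
  show p ≤ _
  rwa [betaCDF_one hr hrn]

theorem betaQuantile_mem_Icc {p : ℝ} (hp : p ∈ Ioc 0 1) : betaQuantile n r p ∈ Icc 0 1 :=
  ⟨le_csInf ⟨1, one_mem_setOf_le_betaCDF hr hrn hp.2⟩
      fun _ => nonneg_of_le_betaCDF hr hrn hp.1,
    csInf_le (bddBelow_setOf_le_betaCDF hr hrn hp.1) (one_mem_setOf_le_betaCDF hr hrn hp.2)⟩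

theorem betaCDF_betaQuantile {p : ℝ} (hp : p ∈ Ioc 0 1) :
    betaCDF n r (betaQuantile n r p) = p :=
  apply_genInv_eq (continuous_betaCDF hr hrn) ⟨1, one_mem_setOf_le_betaCDF hr hrn hp.2⟩
    (bddBelow_setOf_le_betaCDF hr hrn hp.1)

theorem eval_binomialTail_betaQuantile {p : ℝ} (hp : p ∈ Ioc 0 1) :
    (binomialTail n r).eval (betaQuantile n r p) = p := by
  rw [← betaCDF_eq_eval_of_mem hr hrn (betaQuantile_mem_Icc hr hrn hp),
    betaCDF_betaQuantile hr hrn hp]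

theorem strictMonoOn_betaQuantile : StrictMonoOn (betaQuantile n r) (Ioc 0 1) := by
  intro p hp q hq hpq
  refine lt_of_le_of_ne (csInf_le_csInf (bddBelow_setOf_le_betaCDF hr hrn hp.1)
    ⟨1, one_mem_setOf_le_betaCDF hr hrn hq.2⟩ fun x hx => hpq.le.trans hx) fun h => hpq.ne ?_
  rw [← betaCDF_betaQuantile hr hrn hp, h, betaCDF_betaQuantile hr hrn hq]

end BetaQuantile

theorem Real.exp_neg_log_one_div {δ : ℝ} (hδ : 0 < δ) :
    Real.exp (-Real.log (1 / δ)) = δ := by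
  rw [one_div, Real.log_inv, neg_neg, Real.exp_log hδ]

theorem two_mul_mul_sqrt_div_sq_div {n L : ℝ} (hn : 0 < n) (hL : 0 ≤ L) :
    2 * (n * √(L / (2 * n))) ^ 2 / n = L := by
  rw [mul_pow, Real.sq_sqrt (by positivity)]
  field_simp

theorem two_mul_sqrt_div_sub_inv_le {n L : ℝ} (hn : 0 < n) (hL : 0 ≤ L)
    (hLn : 2 * L ≤ n + 2) :
    2 * √(L / (2 * n)) - 1 / n ≤ √(2 * L / (n + 2)) := by
  have h2 : 2 * √(L / (2 * n)) = √(2 * L / n) := by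
    rw [show 2 * L / n = 2 ^ 2 * (L / (2 * n)) by field_simp,
      Real.sqrt_mul (by norm_num), Real.sqrt_sq (by norm_num)]
  rw [h2, Real.sqrt_div (by positivity), Real.sqrt_div (by positivity)]
  set A := √(2 * L)
  set a := √n
  set b := √(n + 2)
  have ha : 0 < a := Real.sqrt_pos.mpr hn
  have hb : 0 < b := Real.sqrt_pos.mpr (by positivity)
  have hAb : A ≤ b := Real.sqrt_le_sqrt hLn
  have hba : a ≤ b := Real.sqrt_le_sqrt (by linarith)
  have ha2 : a ^ 2 = n := Real.sq_sqrt hn.le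
  have hb2 : b ^ 2 = n + 2 := Real.sq_sqrt (by positivity)
  have hab : a * b ≤ n + 1 := by nlinarith [sq_nonneg (a * b - (n + 1)), sq_nonneg (a - b)]
  rw [← ha2, div_sub_div _ _ ha.ne' (by positivity), div_le_div_iff₀ (by positivity) hb]
  have key : A * a * (b - a) ≤ b := by
    nlinarith [mul_le_mul_of_nonneg_right hAb (mul_nonneg ha.le (sub_nonneg.mpr hba))]
  nlinarith [mul_le_mul_of_nonneg_left key ha.le]

section BetaQuantileBounds

variable {n r : ℕ} (hr : 1 ≤ r) (hrn : r ≤ n) {δ : ℝ} (hδ : δ ∈ Ioo 0 1)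
include hr hrn hδ

theorem sub_sqrt_le_betaQuantile :
    r / n - √(Real.log (1 / δ) / (2 * n)) ≤ betaQuantile n r δ := by
  have hn : (0 : ℝ) < n := by exact_mod_cast (by omega : 0 < n)
  have hL := Real.log_pos (one_lt_one_div hδ.1 hδ.2)
  set s := √(Real.log (1 / δ) / (2 * n))
  refine le_csInf ⟨1, one_mem_setOf_le_betaCDF hr hrn hδ.2.le⟩ fun x (hx : δ ≤ _) => ?_
  by_contra! hlt
  have hx0 := nonneg_of_le_betaCDF hr hrn hδ.1 hx
  have hns : 0 ≤ n * s := by positivity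
  have hdev : n * s < r - n * x := by
    rw [lt_sub_iff_add_lt, lt_div_iff₀ hn] at hlt; linarith
  have hx1 : x ≤ 1 := by
    have : (r : ℝ) ≤ n := by exact_mod_cast hrn
    nlinarith
  refine hx.not_gt ?_
  calc betaCDF n r x = (binomialTail n r).eval x := betaCDF_eq_eval_of_mem hr hrn ⟨hx0, hx1⟩
    _ ≤ Real.exp (-2 * (r - n * x) ^ 2 / n) :=
        eval_binomialTail_le_exp (by omega) ⟨hx0, hx1⟩ (by linarith)
    _ < Real.exp (-(2 * (n * s) ^ 2 / n)) := by
        rw [Real.exp_lt_exp, neg_mul, neg_div, neg_lt_neg_iff]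
        gcongr
    _ = δ := by rw [two_mul_mul_sqrt_div_sq_div hn hL.le, Real.exp_neg_log_one_div hδ.1]

/-- The lower tail of `Bin(n, z)` is an upper tail of `Bin(n, 1 - z)`, by
`binomialTail_add_comp_one_sub`. -/
theorem betaQuantile_one_sub_le :
    betaQuantile n r (1 - δ) ≤ (r - 1) / n + √(Real.log (1 / δ) / (2 * n)) := by
  have hn : (0 : ℝ) < n := by exact_mod_cast (by omega : 0 < n)
  have hL := Real.log_pos (one_lt_one_div hδ.1 hδ.2)
  set s := √(Real.log (1 / δ) / (2 * n))
  set z := (r - 1) / n + s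
  have hdev : (n + 1 - r : ℕ) - n * (1 - z) = n * s := by
    rw [Nat.cast_sub (by omega)]; push_cast; simp only [z]; field_simp; ring
  have hz0 : 0 ≤ z :=
    add_nonneg (div_nonneg (sub_nonneg.mpr (by exact_mod_cast hr)) hn.le) (Real.sqrt_nonneg _)
  have hp : 1 - δ ∈ Ioc 0 1 := ⟨by linarith [hδ.2], by linarith [hδ.1]⟩
  rcases le_or_gt 1 z with hz1 | hz1
  · exact (betaQuantile_mem_Icc hr hrn hp).2.trans hz1
  refine csInf_le (bddBelow_setOf_le_betaCDF hr hrn hp.1) (?_ : 1 - δ ≤ _)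
  have hsymm := congrArg (Polynomial.eval z)
    (binomialTail_add_comp_one_sub (n := n) (r := r) (by omega))
  simp only [Polynomial.eval_add, Polynomial.eval_comp, Polynomial.eval_sub, Polynomial.eval_one,
    Polynomial.eval_X] at hsymm
  have hlow : (binomialTail n (n + 1 - r)).eval (1 - z) ≤ δ := by
    calc (binomialTail n (n + 1 - r)).eval (1 - z)
        ≤ Real.exp (-2 * ((n + 1 - r : ℕ) - n * (1 - z)) ^ 2 / n) :=
          eval_binomialTail_le_exp (by omega) ⟨by linarith, by linarith⟩
            (by linarith [show 0 ≤ n * s by positivity])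
      _ = δ := by
          rw [hdev, neg_mul, neg_div, two_mul_mul_sqrt_div_sq_div hn hL.le,
            Real.exp_neg_log_one_div hδ.1]
  rw [betaCDF_eq_eval_of_mem hr hrn ⟨hz0, hz1.le⟩]
  linarith

theorem betaQuantile_one_sub_sub_betaQuantile_le :
    betaQuantile n r (1 - δ) - betaQuantile n r δ ≤ √(2 * Real.log (1 / δ) / (n + 2)) := by
  have hn : (0 : ℝ) < n := by exact_mod_cast (by omega : 0 < n)
  have hL := Real.log_pos (one_lt_one_div hδ.1 hδ.2)
  have hQ := betaQuantile_mem_Icc hr hrn (p := δ) ⟨hδ.1, hδ.2.le⟩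
  have hQ' :=
    betaQuantile_mem_Icc hr hrn (p := 1 - δ) ⟨by linarith [hδ.2], by linarith [hδ.1]⟩
  rcases le_or_gt ((n : ℝ) + 2) (2 * Real.log (1 / δ)) with hbig | hsmall
  · have : 1 ≤ √(2 * Real.log (1 / δ) / (n + 2)) :=
      Real.one_le_sqrt.mpr ((one_le_div (by positivity)).mpr hbig)
    linarith [hQ.1, hQ'.2]
  calc betaQuantile n r (1 - δ) - betaQuantile n r δ
      ≤ ((r - 1) / n + √(Real.log (1 / δ) / (2 * n)))
          - (r / n - √(Real.log (1 / δ) / (2 * n))) :=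
        sub_le_sub (betaQuantile_one_sub_le hr hrn hδ) (sub_sqrt_le_betaQuantile hr hrn hδ)
    _ = 2 * √(Real.log (1 / δ) / (2 * n)) - 1 / n := by ring
    _ ≤ √(2 * Real.log (1 / δ) / (n + 2)) := two_mul_sqrt_div_sub_inv_le hn hL.le hsmall.le

end BetaQuantileBounds

/-- Split according to the position of the inflection point `m` relative to `[a, b]`: the chord
over `[a, b]` is steeper than the one over `[c, a]` on the convex side and than the one over
`[b, d]` on the concave side. -/
theorem sub_mul_le_sub_mul_of_convexOn_concaveOn {f : ℝ → ℝ} {lo hi m c a b d t : ℝ}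
    (hconv : ConvexOn ℝ (Icc lo m) f) (hconc : ConcaveOn ℝ (Icc m hi) f)
    (hmono : MonotoneOn f (Icc lo hi)) (hc : lo ≤ c) (hca : c < a) (hab : a < b) (hbd : b < d)
    (hd : d ≤ hi) (hta : t ≤ f a - f c) (htb : t ≤ f d - f b) :
    (b - a) * t ≤ (f b - f a) * (d - c) := by
  have hmem {y : ℝ} (h₁ : c ≤ y) (h₂ : y ≤ d) : y ∈ Icc lo hi :=
    ⟨hc.trans h₁, h₂.trans hd⟩
  have hfab : f a ≤ f b := hmono (hmem hca.le (by linarith)) (hmem (by linarith) hbd.le) hab.le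
  rcases le_or_gt b m with hbm | hmb
  · have hslope := hconv.slope_mono_adjacent ⟨hc, by linarith⟩ ⟨by linarith, hbm⟩ hca hab
    rw [div_le_div_iff₀ (by linarith) (by linarith)] at hslope
    nlinarith
  rcases le_or_gt m a with hma | ham
  · have hslope := hconc.slope_anti_adjacent ⟨hma, by linarith⟩ ⟨by linarith, hd⟩ hab hbd
    rw [div_le_div_iff₀ (by linarith) (by linarith)] at hslope
    nlinarith
  have hfam : f a ≤ f m :=
    hmono (hmem hca.le (by linarith)) (hmem (by linarith) (by linarith)) ham.le
  have hfmb : f m ≤ f b :=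
    hmono (hmem (by linarith) (by linarith)) (hmem (by linarith) hbd.le) hmb.le
  have hleft := hconv.slope_mono_adjacent ⟨hc, by linarith⟩ ⟨by linarith, le_rfl⟩ hca ham
  have hright := hconc.slope_anti_adjacent ⟨le_rfl, by linarith⟩ ⟨by linarith, hd⟩ hmb hbd
  rw [div_le_div_iff₀ (by linarith) (by linarith)] at hleft hright
  nlinarith

theorem betaQuantile_add_sub_mul_le {n r : ℕ} (hr : 1 ≤ r) (hrn : r ≤ n) {ε x t δ : ℝ}
    (hε : 0 < ε) (htx : t ≤ x) (ht : t ≤ 1 - x - ε) (hδ : 0 < δ) (hδt : δ < t) :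
    (betaQuantile n r (x + ε) - betaQuantile n r x) * (t - δ)
      ≤ ε * (betaQuantile n r (1 - δ) - betaQuantile n r δ) := by
  have hQ := strictMonoOn_betaQuantile hr hrn
  have hc : δ ∈ Ioc 0 1 := ⟨hδ, by linarith⟩
  have ha : x ∈ Ioc 0 1 := ⟨by linarith, by linarith⟩
  have hb : x + ε ∈ Ioc 0 1 := ⟨by linarith, by linarith⟩
  have hd : 1 - δ ∈ Ioc 0 1 := ⟨by linarith, by linarith⟩
  have key := sub_mul_le_sub_mul_of_convexOn_concaveOn (convexOn_eval_binomialTail hr hrn)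
    (concaveOn_eval_binomialTail hr hrn) (monotoneOn_eval_binomialTail hr hrn)
    (betaQuantile_mem_Icc hr hrn hc).1 (hQ hc ha (by linarith)) (hQ ha hb (by linarith))
    (hQ hb hd (by linarith)) (betaQuantile_mem_Icc hr hrn hd).2 (t := t - δ)
  simp only [eval_binomialTail_betaQuantile hr hrn, hc, ha, hb, hd] at key
  linarith [key (by linarith) (by linarith)]

theorem gFun_mul_le {t Δ B : ℝ} (hΔ : 0 ≤ Δ) (hB : 0 ≤ B)
    (h : ∀ δ ∈ Ioo 0 (min t (1 - t)), Δ * (t - δ) ≤ B * √(Real.log (1 / δ))) :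
    gFun t * Δ ≤ B := by
  rw [gFun, mul_comm, ← smul_eq_mul, ← Real.sSup_smul_of_nonneg hΔ]
  refine Real.sSup_le ?_ hB
  rintro _ ⟨_, ⟨δ, hδ, rfl⟩, rfl⟩
  simp only [smul_eq_mul, ← mul_div_assoc]
  rcases (Real.sqrt_nonneg (Real.log (1 / δ))).eq_or_lt with h0 | hpos
  · rw [← h0, div_zero]; exact hB
  · exact (div_le_iff₀ hpos).mpr (h δ hδ)

theorem gFun_pos {t : ℝ} (ht : t ∈ Ioo 0 (1 / 2)) : 0 < gFun t := by
  obtain ⟨ht0, ht1⟩ := ht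
  have hmin : min t (1 - t) = t := min_eq_left (by linarith)
  have hbdd :
      BddAbove ((fun δ => (t - δ) / √(Real.log (1 / δ))) '' Ioo 0 (min t (1 - t))) := by
    refine ⟨t / √(Real.log (1 / t)), ?_⟩
    rintro _ ⟨δ, hδ, rfl⟩
    rw [hmin] at hδ
    refine div_le_div₀ ht0.le (by linarith [hδ.1]) (Real.sqrt_pos.mpr
      (Real.log_pos (one_lt_one_div ht0 (by linarith)))) (Real.sqrt_le_sqrt ?_)
    exact Real.log_le_log (by positivity) (one_div_le_one_div_of_le hδ.1 hδ.2.le)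
  have hhalf : 0 < √(Real.log (1 / (t / 2))) :=
    Real.sqrt_pos.mpr (Real.log_pos (one_lt_one_div (by linarith) (by linarith)))
  exact (div_pos (by linarith) hhalf).trans_le
    (le_csSup hbdd ⟨t / 2, by rw [hmin]; exact ⟨by linarith, by linarith⟩, rfl⟩)

theorem betaQuantile_increment_bound_general (n : ℕ)
    (ℓ : ℕ) (hℓ1 : 1 ≤ ℓ) (hℓn : ℓ ≤ n)
    (ε x : ℝ) (hε : ε ∈ Ioo (0:ℝ) 1) (hx : x ∈ Ioo (0:ℝ) (1 - ε)) :
    0 ≤ betaQuantile n ℓ (x + ε) - betaQuantile n ℓ x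
    ∧ betaQuantile n ℓ (x + ε) - betaQuantile n ℓ x
        ≤ ε / Real.sqrt ((n : ℝ) + 2) * (Real.sqrt 2 / gFun (min x (1 - x - ε))) := by
  obtain ⟨hε0, -⟩ := hε
  obtain ⟨hx0, hx1⟩ := hx
  set t := min x (1 - x - ε)
  have ht : t ∈ Ioo 0 (1 / 2) :=
    ⟨lt_min hx0 (by linarith),
      by linarith [min_le_left x (1 - x - ε), min_le_right x (1 - x - ε)]⟩
  have hΔ : 0 ≤ betaQuantile n ℓ (x + ε) - betaQuantile n ℓ x :=
    sub_nonneg.mpr ((strictMonoOn_betaQuantile hℓ1 hℓn).monotoneOn ⟨hx0, by linarith⟩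
      ⟨by linarith, by linarith⟩ (by linarith))
  refine ⟨hΔ, ?_⟩
  have hg := gFun_mul_le (t := t) hΔ (B := ε / √(n + 2) * √2) (by positivity) fun δ hδ => by
    have hδt : δ < t := hδ.2.trans_le (min_le_left _ _)
    calc (betaQuantile n ℓ (x + ε) - betaQuantile n ℓ x) * (t - δ)
        ≤ ε * (betaQuantile n ℓ (1 - δ) - betaQuantile n ℓ δ) :=
          betaQuantile_add_sub_mul_le hℓ1 hℓn hε0 (min_le_left _ _) (min_le_right _ _) hδ.1
            hδt
      _ ≤ ε * √(2 * Real.log (1 / δ) / (n + 2)) := by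
          gcongr
          exact betaQuantile_one_sub_sub_betaQuantile_le hℓ1 hℓn ⟨hδ.1, by linarith [ht.2]⟩
      _ = ε / √(n + 2) * √2 * √(Real.log (1 / δ)) := by
          rw [Real.sqrt_div' _ (by positivity), Real.sqrt_mul zero_le_two]; ring
  rw [mul_div_assoc', le_div_iff₀ (gFun_pos ht), mul_comm]
  exact hg

/-- Local Lipschitz bound for the Beta(ℓ, n-ℓ+1) quantile function:
for `ε ∈ (0,1)` and `x ∈ (0, 1-ε)`,
`0 ≤ F⁻¹(x+ε) - F⁻¹(x) ≤ (ε/√(n+2)) · √2 / g(min{x, 1-x-ε})`. -/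
theorem betaQuantile_increment_bound (n : ℕ) (hn : 1 ≤ n)
    (ℓ : ℕ) (hℓ1 : 1 ≤ ℓ) (hℓn : ℓ ≤ n)
    (ε x : ℝ) (hε : ε ∈ Ioo (0:ℝ) 1) (hx : x ∈ Ioo (0:ℝ) (1 - ε)) :
    0 ≤ betaQuantile n ℓ (x + ε) - betaQuantile n ℓ x
    ∧ betaQuantile n ℓ (x + ε) - betaQuantile n ℓ x
        ≤ ε / Real.sqrt ((n : ℝ) + 2) * (Real.sqrt 2 / gFun (min x (1 - x - ε))) :=
  betaQuantile_increment_bound_general n ℓ hℓ1 hℓn ε x hε hx
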